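/- Let u, v, w ∈ A* with |u| ≥ |v|. Then u v̄ w ≡ u w v̄, i.e., writing u, reading v, then writing w induces the same queue transformation as writing uw then reading v. -/

import Mathlib

/-- A basic queue action: write a letter or read a letter. -/
inductive Act (A : Type) : Type
  | wr (a : A)
  | rd (a : A)
deriving DecidableEq

variable {A : Type} [DecidableEq A]

/-- The action of words over `Act A` on queue states `A* ∪ {⊥}` (⊥ = `none`). -/
def act : Option (List A) → List (Act A) → Option (List A)
  | q, [] => q
  | none, _ :: _ => none
  | some q, (Act.wr a) :: u => act (some (q ++ [a])) u
  | some q, (Act.rd a) :: u =>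
    match q with
    | [] => none
    | b :: q' => if b = a then act (some q') u else none

/-- Two words over `Act A` are equivalent if they act identically on all queues. -/
def qequiv (u v : List (Act A)) : Prop := ∀ q : List A, act (some q) u = act (some q) v

/-- Writing the word `w`. -/
def W (w : List A) : List (Act A) := w.map Act.wr

/-- Reading the word `w` (the barred copy of `w`). -/
def R (w : List A) : List (Act A) := w.map Act.rd

/-- `shuffle s` is the word `s₁ s̄₁ s₂ s̄₂ … sₖ s̄ₖ`. -/
def shuffle (s : List A) : List (Act A) := s.flatMap fun a => [Act.wr a, Act.rd a]

/-- The projection to write letters. -/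
def prW (w : List (Act A)) : List A :=
  w.filterMap fun x => match x with | Act.wr a => some a | Act.rd _ => none

/-- The projection to read letters (with the bars removed). -/
def prR (w : List (Act A)) : List A :=
  w.filterMap fun x => match x with | Act.wr _ => none | Act.rd a => some a

theorem act_append (u v : List (Act A)) : ∀ q, act q (u ++ v) = act (act q u) v := by
  induction u with
  | nil =>
      intro q
      cases q <;> rfl
  | cons x u ih =>
      intro q
      cases q with
      | none =>
          simp only [List.cons_append, act]
          cases v with
          | nil => rfl
          | cons _ _ => rfl
      | some q =>
          cases x with
          | wr a => simpa [act] using ih _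
          | rd a =>
              cases q with
              | nil =>
                  simp only [List.cons_append, act]
                  cases v with
                  | nil => rfl
                  | cons _ _ => rfl
              | cons b q' =>
                  by_cases h : b = a
                  · simp [List.cons_append, act, h, ih]
                  · simp only [List.cons_append, act, if_neg h]
                    cases v with
                    | nil => rfl
                    | cons _ _ => rfl

/-- The setoid of queue-action equivalence. -/
def qsetoid (A : Type) [DecidableEq A] : Setoid (List (Act A)) :=
  ⟨qequiv, ⟨fun _ _ => rfl, fun h q => (h q).symm, fun h1 h2 q => (h1 q).trans (h2 q)⟩⟩

/-- The monoid of queue actions. -/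
def QAct (A : Type) [DecidableEq A] : Type := Quotient (qsetoid A)

theorem act_none : ∀ v : List (Act A), act (none : Option (List A)) v = none
  | [] => rfl
  | _ :: _ => rfl

theorem qequiv_append {u u' v v' : List (Act A)} (hu : qequiv u u') (hv : qequiv v v') :
    qequiv (u ++ v) (u' ++ v') := by
  intro q
  rw [act_append, act_append, hu q]
  cases h : act (some q) u' with
  | none => rw [act_none, act_none]
  | some q' => exact hv q'

instance : Monoid (QAct A) where
  mul := Quotient.map₂ (· ++ ·) (fun _ _ hu _ _ hv => qequiv_append hu hv)
  one := Quotient.mk (qsetoid A) []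
  mul_assoc := by
    rintro ⟨u⟩ ⟨v⟩ ⟨w⟩
    exact congrArg (Quotient.mk (qsetoid A)) (List.append_assoc u v w)
  one_mul := by
    rintro ⟨u⟩
    rfl
  mul_one := by
    rintro ⟨u⟩
    exact congrArg (Quotient.mk (qsetoid A)) (List.append_nil u)

/-- The class of a word in the monoid of queue actions. -/
def cls (w : List (Act A)) : QAct A := Quotient.mk (qsetoid A) w

theorem cls_mul (u v : List (Act A)) : cls u * cls v = cls (u ++ v) := rfl

/-! Writing appends to the queue and reading `v` strips the prefix `v`; once the queue is at
least `|v|` long, whether `v` is a prefix of it no longer depends on letters appended at its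
end, so reading `v` and writing `w` commute. Having written `u` first, with `|u| ≥ |v|`,
ensures exactly this. -/

theorem act_W (u q : List A) : act (some q) (W u) = some (q ++ u) := by
  induction u generalizing q with
  | nil => simp [W, act]
  | cons a u ih => simpa [W, act] using ih (q ++ [a])

theorem act_R (v q : List A) :
    act (some q) (R v) = if v <+: q then some (q.drop v.length) else none := by
  induction v generalizing q with
  | nil => simp [R, act]
  | cons a v ih =>
      cases q with
      | nil => simp [R, act]
      | cons b q =>
          by_cases hb : b = a
          · subst hb
            simpa [R, act, List.cons_prefix_cons] using ih q
          · simp [R, act, hb, List.cons_prefix_cons, Ne.symm hb]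

theorem List.prefix_append_iff_of_length_le {α : Type*} {v q : List α} (w : List α)
    (hv : v.length ≤ q.length) : v <+: q ++ w ↔ v <+: q := by
  rw [List.prefix_iff_eq_take, List.prefix_iff_eq_take, List.take_append_of_le_length hv]

theorem act_R_append_W {v q : List A} (w : List A) (hv : v.length ≤ q.length) :
    act (some q) (R v ++ W w) = act (some q) (W w ++ R v) := by
  rw [act_append, act_R, act_append, act_W, act_R]
  simp only [List.prefix_append_iff_of_length_le w hv]
  split_ifs
  · rw [act_W, List.drop_append_of_le_length hv]
  · exact act_none _

theorem stmt9_general (u v w : List A) (h : v.length ≤ u.length) :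
    qequiv (W u ++ R v ++ W w) (W (u ++ w) ++ R v) := by
  intro q
  have hv : v.length ≤ (q ++ u).length := by
    rw [List.length_append]
    omega
  rw [show W (u ++ w) = W u ++ W w from List.map_append, List.append_assoc, List.append_assoc,
    act_append, act_append (W u), act_W, act_R_append_W w hv]

/-- If `|u| ≥ |v|` then `u v̄ w ≡ u w v̄`. -/
theorem stmt9 [Fintype A] [Nontrivial A] (u v w : List A) (h : v.length ≤ u.length) :
    qequiv (W u ++ R v ++ W w) (W (u ++ w) ++ R v) :=
  stmt9_general u v w h
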